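/- Let R ≥ 0 and B ≥ 0 satisfy 4RB < 1, and let a : ℕ → ℝ be a sequence with a(i) ≥ 0 for all i, a(0) = 0, and a(i+1) ≤ R + B·a(i)² for all i. Then a(i) ≤ 2R for all i. -/

import Mathlib

lemma add_mul_sq_le_two_mul {R B x : ℝ} (hB : 0 ≤ B) (hRB : 4 * R * B ≤ 1)
    (hx₀ : 0 ≤ x) (hx : x ≤ 2 * R) : R + B * x ^ 2 ≤ 2 * R := by
  have hR : 0 ≤ R := by linarith
  calc R + B * x ^ 2 ≤ R + B * (2 * R) ^ 2 := by gcongr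
    _ = R + R * (4 * R * B) := by ring
    _ ≤ R + R * 1 := by gcongr
    _ = 2 * R := by ring

/-- Abstract core of Lemma 4.2: if `4RB < 1`, `a 0 = 0` and `a (i+1) ≤ R + B (a i)²`,
then `a i ≤ 2R` for all `i`. -/
theorem uniform_bound_recursion (R B : ℝ) (hR : 0 ≤ R) (hB : 0 ≤ B)
    (hq : 4 * R * B < 1) (a : ℕ → ℝ) (ha : ∀ i, 0 ≤ a i) (h0 : a 0 = 0)
    (hrec : ∀ i, a (i + 1) ≤ R + B * a i ^ 2) :
    ∀ i, a i ≤ 2 * R := by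
  intro i
  induction i with
  | zero => rw [h0]; positivity
  | succ n ih => exact (hrec n).trans (add_mul_sq_le_two_mul hB hq.le (ha n) ih)
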